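/- Let (A,C,ψ) and (A',C',ψ') be entwining structures over a field k. Define (ψ ⊗ ψ'): (C ⊗ C') ⊗ (A ⊗ A') → (A ⊗ A') ⊗ (C ⊗ C') by (ψ ⊗ ψ')(c ⊗ c' ⊗ a ⊗ a') = a_ψ ⊗ a'_{ψ'} ⊗ c^ψ ⊗ c'^{ψ'}. Then (A ⊗ A', C ⊗ C', ψ ⊗ ψ') is an entwining structure, where A ⊗ A' has the tensor product algebra structure and C ⊗ C' the tensor product coalgebra structure. -/

import Mathlib

open TensorProduct

/-- An entwining structure `(A, C, ψ)` over a field `k`: a unital `k`-algebra `A`,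
a counital `k`-coalgebra `C` and a `k`-linear map `ψ : C ⊗ A → A ⊗ C` satisfying the
entwining axioms of Brzeziński–Majid. -/
structure Entwining (k A C : Type) [Field k] [Ring A] [Algebra k A]
    [AddCommGroup C] [Module k C] [Coalgebra k C] : Type where
  ψ : C ⊗[k] A →ₗ[k] A ⊗[k] C
  mul_compat : ψ ∘ₗ TensorProduct.map (LinearMap.id : C →ₗ[k] C) (LinearMap.mul' k A) =
    TensorProduct.map (LinearMap.mul' k A) (LinearMap.id : C →ₗ[k] C)
      ∘ₗ (TensorProduct.assoc k A A C).symm.toLinearMap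
      ∘ₗ TensorProduct.map (LinearMap.id : A →ₗ[k] A) ψ
      ∘ₗ (TensorProduct.assoc k A C A).toLinearMap
      ∘ₗ TensorProduct.map ψ (LinearMap.id : A →ₗ[k] A)
      ∘ₗ (TensorProduct.assoc k C A A).symm.toLinearMap
  comul_compat : TensorProduct.map (LinearMap.id : A →ₗ[k] A)
        (CoalgebraStruct.comul (R := k) (A := C)) ∘ₗ ψ =
    (TensorProduct.assoc k A C C).toLinearMap
      ∘ₗ TensorProduct.map ψ (LinearMap.id : C →ₗ[k] C)
      ∘ₗ (TensorProduct.assoc k C A C).symm.toLinearMap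
      ∘ₗ TensorProduct.map (LinearMap.id : C →ₗ[k] C) ψ
      ∘ₗ (TensorProduct.assoc k C C A).toLinearMap
      ∘ₗ TensorProduct.map (CoalgebraStruct.comul (R := k) (A := C)) (LinearMap.id : A →ₗ[k] A)
  counit_compat : (TensorProduct.rid k A).toLinearMap
      ∘ₗ TensorProduct.map (LinearMap.id : A →ₗ[k] A)
        (CoalgebraStruct.counit (R := k) (A := C)) ∘ₗ ψ =
    (TensorProduct.lid k A).toLinearMap
      ∘ₗ TensorProduct.map (CoalgebraStruct.counit (R := k) (A := C)) (LinearMap.id : A →ₗ[k] A)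
  unit_compat : ∀ c : C, ψ (c ⊗ₜ[k] (1 : A)) = (1 : A) ⊗ₜ[k] c

variable {k A C A' C' : Type}

/-!
The map `ψ ⊗ ψ'` is `T ∘ (ψ ⊗ ψ') ∘ T`, where `T` is the middle-four interchange
`tensorTensorTensorComm`. The multiplication, comultiplication and counit of `A ⊗ A'` and
`C ⊗ C'`, and the associators, are up to `T` the tensor products of those of the two factors,
so each entwining axiom for `ψ ⊗ ψ'` is the same axiom for `ψ` and for `ψ'` side by side.
To pass `T` through the nested occurrences of `ψ`, the multiplicative and comultiplicative
axioms are written as `ψ (c ⊗ a b) = mulTwist ψ (ψ (c ⊗ a) ⊗ b)` and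
`(id ⊗ Δ) (ψ (c ⊗ a)) = comulTwist ψ (Δ c ⊗ a)`, and `mulTwist`, `comulTwist` commute with `T`.
-/

namespace Entwining

section Twists

variable [CommSemiring k] [AddCommMonoid C] [Module k C] [AddCommMonoid C'] [Module k C']

def tensorMap [AddCommMonoid A] [Module k A] [AddCommMonoid A'] [Module k A']
    (ψ : C ⊗[k] A →ₗ[k] A ⊗[k] C) (ψ' : C' ⊗[k] A' →ₗ[k] A' ⊗[k] C') :
    (C ⊗[k] C') ⊗[k] (A ⊗[k] A') →ₗ[k] (A ⊗[k] A') ⊗[k] (C ⊗[k] C') :=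
  (tensorTensorTensorComm k A C A' C').toLinearMap ∘ₗ map ψ ψ' ∘ₗ
    (tensorTensorTensorComm k C C' A A').toLinearMap

@[simp]
lemma tensorMap_tmul [AddCommMonoid A] [Module k A] [AddCommMonoid A'] [Module k A']
    (ψ : C ⊗[k] A →ₗ[k] A ⊗[k] C) (ψ' : C' ⊗[k] A' →ₗ[k] A' ⊗[k] C')
    (c : C) (c' : C') (a : A) (a' : A') :
    tensorMap ψ ψ' ((c ⊗ₜ c') ⊗ₜ (a ⊗ₜ a')) =
      tensorTensorTensorComm k A C A' C' (ψ (c ⊗ₜ a) ⊗ₜ ψ' (c' ⊗ₜ a')) :=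
  rfl

section Mul

variable [Semiring A] [Algebra k A] [Semiring A'] [Algebra k A']

def mulTwist (ψ : C ⊗[k] A →ₗ[k] A ⊗[k] C) : (A ⊗[k] C) ⊗[k] A →ₗ[k] A ⊗[k] C :=
  map (LinearMap.mul' k A) LinearMap.id ∘ₗ (TensorProduct.assoc k A A C).symm.toLinearMap ∘ₗ
    map LinearMap.id ψ ∘ₗ (TensorProduct.assoc k A C A).toLinearMap

lemma rTensor_mul'_assoc_symm_tensorTensorTensorComm (p : A) (p' : A') (u : A ⊗[k] C)
    (v : A' ⊗[k] C') :
    map (LinearMap.mul' k (A ⊗[k] A')) LinearMap.id ((TensorProduct.assoc k _ _ _).symm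
        ((p ⊗ₜ p') ⊗ₜ tensorTensorTensorComm k A C A' C' (u ⊗ₜ v))) =
      tensorTensorTensorComm k A C A' C'
        (map (LinearMap.mul' k A) LinearMap.id ((TensorProduct.assoc k A A C).symm (p ⊗ₜ u)) ⊗ₜ
          map (LinearMap.mul' k A') LinearMap.id
            ((TensorProduct.assoc k A' A' C').symm (p' ⊗ₜ v))) := by
  induction u using TensorProduct.induction_on generalizing v <;>
    induction v using TensorProduct.induction_on <;> simp_all [tmul_add, add_tmul]

lemma mulTwist_tensorMap (ψ : C ⊗[k] A →ₗ[k] A ⊗[k] C) (ψ' : C' ⊗[k] A' →ₗ[k] A' ⊗[k] C')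
    (x : A ⊗[k] C) (y : A' ⊗[k] C') (b : A) (b' : A') :
    mulTwist (tensorMap ψ ψ') (tensorTensorTensorComm k A C A' C' (x ⊗ₜ y) ⊗ₜ (b ⊗ₜ b')) =
      tensorTensorTensorComm k A C A' C' (mulTwist ψ (x ⊗ₜ b) ⊗ₜ mulTwist ψ' (y ⊗ₜ b')) := by
  induction x using TensorProduct.induction_on generalizing y <;>
    induction y using TensorProduct.induction_on <;>
    simp_all [mulTwist, tmul_add, add_tmul, rTensor_mul'_assoc_symm_tensorTensorTensorComm]

end Mul

section Comul

variable [AddCommMonoid A] [Module k A] [AddCommMonoid A'] [Module k A']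

def comulTwist (ψ : C ⊗[k] A →ₗ[k] A ⊗[k] C) : (C ⊗[k] C) ⊗[k] A →ₗ[k] A ⊗[k] (C ⊗[k] C) :=
  (TensorProduct.assoc k A C C).toLinearMap ∘ₗ map ψ LinearMap.id ∘ₗ
    (TensorProduct.assoc k C A C).symm.toLinearMap ∘ₗ map LinearMap.id ψ ∘ₗ
    (TensorProduct.assoc k C C A).toLinearMap

lemma assoc_tensorTensorTensorComm (u : A ⊗[k] C) (v : A' ⊗[k] C') (q : C) (q' : C') :
    TensorProduct.assoc k _ _ _ (tensorTensorTensorComm k A C A' C' (u ⊗ₜ v) ⊗ₜ (q ⊗ₜ q')) =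
      map LinearMap.id (tensorTensorTensorComm k C C C' C').toLinearMap
        (tensorTensorTensorComm k A (C ⊗[k] C) A' (C' ⊗[k] C')
          (TensorProduct.assoc k A C C (u ⊗ₜ q) ⊗ₜ TensorProduct.assoc k A' C' C' (v ⊗ₜ q'))) := by
  induction u using TensorProduct.induction_on generalizing v <;>
    induction v using TensorProduct.induction_on <;> simp_all [tmul_add, add_tmul]

lemma assoc_rTensor_tensorMap (ψ : C ⊗[k] A →ₗ[k] A ⊗[k] C)
    (ψ' : C' ⊗[k] A' →ₗ[k] A' ⊗[k] C') (c : C) (c' : C') (u : A ⊗[k] C) (v : A' ⊗[k] C') :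
    TensorProduct.assoc k _ _ _ (map (tensorMap ψ ψ') LinearMap.id
        ((TensorProduct.assoc k _ _ _).symm
          ((c ⊗ₜ c') ⊗ₜ tensorTensorTensorComm k A C A' C' (u ⊗ₜ v)))) =
      map LinearMap.id (tensorTensorTensorComm k C C C' C').toLinearMap
        (tensorTensorTensorComm k A (C ⊗[k] C) A' (C' ⊗[k] C')
          (TensorProduct.assoc k A C C
              (map ψ LinearMap.id ((TensorProduct.assoc k C A C).symm (c ⊗ₜ u))) ⊗ₜ
            TensorProduct.assoc k A' C' C'
              (map ψ' LinearMap.id ((TensorProduct.assoc k C' A' C').symm (c' ⊗ₜ v))))) := by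
  induction u using TensorProduct.induction_on generalizing v <;>
    induction v using TensorProduct.induction_on <;>
    simp_all [tmul_add, add_tmul, assoc_tensorTensorTensorComm]

lemma comulTwist_tensorMap (ψ : C ⊗[k] A →ₗ[k] A ⊗[k] C)
    (ψ' : C' ⊗[k] A' →ₗ[k] A' ⊗[k] C') (w : C ⊗[k] C) (w' : C' ⊗[k] C') (a : A) (a' : A') :
    comulTwist (tensorMap ψ ψ') (tensorTensorTensorComm k C C C' C' (w ⊗ₜ w') ⊗ₜ (a ⊗ₜ a')) =
      map LinearMap.id (tensorTensorTensorComm k C C C' C').toLinearMap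
        (tensorTensorTensorComm k A (C ⊗[k] C) A' (C' ⊗[k] C')
          (comulTwist ψ (w ⊗ₜ a) ⊗ₜ comulTwist ψ' (w' ⊗ₜ a'))) := by
  induction w using TensorProduct.induction_on generalizing w' <;>
    induction w' using TensorProduct.induction_on <;>
    simp_all [comulTwist, tmul_add, add_tmul, assoc_rTensor_tensorMap]

variable [Coalgebra k C] [Coalgebra k C']

lemma lTensor_comul_tensorTensorTensorComm (x : A ⊗[k] C) (y : A' ⊗[k] C') :
    map LinearMap.id (CoalgebraStruct.comul (R := k) (A := C ⊗[k] C'))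
        (tensorTensorTensorComm k A C A' C' (x ⊗ₜ y)) =
      map LinearMap.id (tensorTensorTensorComm k C C C' C').toLinearMap
        (tensorTensorTensorComm k A (C ⊗[k] C) A' (C' ⊗[k] C')
          (map LinearMap.id (CoalgebraStruct.comul (R := k) (A := C)) x ⊗ₜ
            map LinearMap.id (CoalgebraStruct.comul (R := k) (A := C')) y)) := by
  induction x using TensorProduct.induction_on generalizing y <;>
    induction y using TensorProduct.induction_on <;>
    simp_all [tmul_add, add_tmul, AlgebraTensorModule.tensorTensorTensorComm_eq]

lemma rid_lTensor_counit_tensorTensorTensorComm (x : A ⊗[k] C) (y : A' ⊗[k] C') :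
    TensorProduct.rid k _ (map LinearMap.id (CoalgebraStruct.counit (R := k) (A := C ⊗[k] C'))
        (tensorTensorTensorComm k A C A' C' (x ⊗ₜ y))) =
      TensorProduct.rid k A (map LinearMap.id (CoalgebraStruct.counit (R := k) (A := C)) x) ⊗ₜ
        TensorProduct.rid k A'
          (map LinearMap.id (CoalgebraStruct.counit (R := k) (A := C')) y) := by
  induction x using TensorProduct.induction_on generalizing y <;>
    induction y using TensorProduct.induction_on <;>
    simp_all [tmul_add, add_tmul, smul_tmul', smul_smul, mul_comm]

end Comul

end Twists

variable [Field k] [Ring A] [Algebra k A] [AddCommGroup C] [Module k C] [Coalgebra k C]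
  [Ring A'] [Algebra k A'] [AddCommGroup C'] [Module k C'] [Coalgebra k C']

lemma ψ_tmul_mul (e : Entwining k A C) (c : C) (a b : A) :
    e.ψ (c ⊗ₜ (a * b)) = mulTwist e.ψ (e.ψ (c ⊗ₜ a) ⊗ₜ b) := by
  simpa [mulTwist] using LinearMap.congr_fun e.mul_compat (c ⊗ₜ (a ⊗ₜ b))

lemma lTensor_comul_ψ (e : Entwining k A C) (c : C) (a : A) :
    map LinearMap.id (CoalgebraStruct.comul (R := k) (A := C)) (e.ψ (c ⊗ₜ a)) =
      comulTwist e.ψ (CoalgebraStruct.comul (R := k) c ⊗ₜ a) :=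
  LinearMap.congr_fun e.comul_compat (c ⊗ₜ a)

lemma rid_lTensor_counit_ψ (e : Entwining k A C) (c : C) (a : A) :
    TensorProduct.rid k A (map LinearMap.id (CoalgebraStruct.counit (R := k) (A := C))
      (e.ψ (c ⊗ₜ a))) = CoalgebraStruct.counit (R := k) c • a := by
  simpa using LinearMap.congr_fun e.counit_compat (c ⊗ₜ a)

lemma tensorMap_tmul_mul (e : Entwining k A C) (e' : Entwining k A' C') (c : C) (c' : C')
    (a b : A) (a' b' : A') :
    tensorMap e.ψ e'.ψ ((c ⊗ₜ c') ⊗ₜ ((a ⊗ₜ a') * (b ⊗ₜ b'))) =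
      mulTwist (tensorMap e.ψ e'.ψ)
        (tensorMap e.ψ e'.ψ ((c ⊗ₜ c') ⊗ₜ (a ⊗ₜ a')) ⊗ₜ (b ⊗ₜ b')) := by
  rw [Algebra.TensorProduct.tmul_mul_tmul, tensorMap_tmul, tensorMap_tmul, ψ_tmul_mul,
    ψ_tmul_mul, mulTwist_tensorMap]

lemma lTensor_comul_tensorMap (e : Entwining k A C) (e' : Entwining k A' C') (c : C) (c' : C')
    (a : A) (a' : A') :
    map LinearMap.id (CoalgebraStruct.comul (R := k) (A := C ⊗[k] C'))
        (tensorMap e.ψ e'.ψ ((c ⊗ₜ c') ⊗ₜ (a ⊗ₜ a'))) =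
      comulTwist (tensorMap e.ψ e'.ψ)
        (CoalgebraStruct.comul (R := k) (c ⊗ₜ c') ⊗ₜ (a ⊗ₜ a')) := by
  rw [tensorMap_tmul, lTensor_comul_tensorTensorTensorComm, lTensor_comul_ψ, lTensor_comul_ψ,
    TensorProduct.comul_tmul, AlgebraTensorModule.tensorTensorTensorComm_eq,
    comulTwist_tensorMap]

lemma rid_lTensor_counit_tensorMap (e : Entwining k A C) (e' : Entwining k A' C') (c : C)
    (c' : C') (a : A) (a' : A') :
    TensorProduct.rid k _ (map LinearMap.id (CoalgebraStruct.counit (R := k) (A := C ⊗[k] C'))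
        (tensorMap e.ψ e'.ψ ((c ⊗ₜ c') ⊗ₜ (a ⊗ₜ a')))) =
      CoalgebraStruct.counit (R := k) (A := C ⊗[k] C') (c ⊗ₜ c') • (a ⊗ₜ a') := by
  rw [tensorMap_tmul, rid_lTensor_counit_tensorTensorTensorComm, rid_lTensor_counit_ψ,
    rid_lTensor_counit_ψ, TensorProduct.counit_tmul, smul_tmul_smul, smul_eq_mul, mul_comm]

lemma tensorMap_tmul_one (e : Entwining k A C) (e' : Entwining k A' C') (z : C ⊗[k] C') :
    tensorMap e.ψ e'.ψ (z ⊗ₜ 1) = 1 ⊗ₜ z := by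
  induction z using TensorProduct.induction_on with
  | zero => simp
  | tmul c c' =>
    rw [Algebra.TensorProduct.one_def, tensorMap_tmul, e.unit_compat, e'.unit_compat]
    rfl
  | add z₁ z₂ h₁ h₂ => rw [add_tmul, map_add, h₁, h₂, tmul_add]

def tensor (e : Entwining k A C) (e' : Entwining k A' C') :
    Entwining k (A ⊗[k] A') (C ⊗[k] C') where
  ψ := tensorMap e.ψ e'.ψ
  mul_compat := by
    ext c c' a a' b b'
    exact tensorMap_tmul_mul e e' c c' a b a' b'
  comul_compat := by
    ext c c' a a'
    exact lTensor_comul_tensorMap e e' c c' a a'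
  counit_compat := by
    ext c c' a a'
    exact rid_lTensor_counit_tensorMap e e' c c' a a'
  unit_compat := tensorMap_tmul_one e e'

end Entwining

theorem tensor_entwining
    [Field k] [Ring A] [Algebra k A] [AddCommGroup C] [Module k C] [Coalgebra k C]
    [Ring A'] [Algebra k A'] [AddCommGroup C'] [Module k C'] [Coalgebra k C']
    (e : Entwining k A C) (e' : Entwining k A' C')
    (Ψ : (C ⊗[k] C') ⊗[k] (A ⊗[k] A') →ₗ[k] (A ⊗[k] A') ⊗[k] (C ⊗[k] C'))
    (hΨ : ∀ (c : C) (c' : C') (a : A) (a' : A'),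
      Ψ ((c ⊗ₜ[k] c') ⊗ₜ[k] (a ⊗ₜ[k] a')) =
        TensorProduct.tensorTensorTensorComm k A C A' C'
          ((e.ψ (c ⊗ₜ[k] a)) ⊗ₜ[k] (e'.ψ (c' ⊗ₜ[k] a')))) :
    ∃ E : Entwining k (A ⊗[k] A') (C ⊗[k] C'), E.ψ = Ψ :=
  ⟨e.tensor e', ext_fourfold' fun c c' a a' => (hΨ c c' a a').symm⟩
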